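/- arXiv:2205.04082 — 2 statements merged into one kernel-verified Lean document; each statement's English description precedes it below -/
import Mathlib

section
/- Let s be a nonnegative integer and let G be the disjoint union of a 5-cycle and s single edges (the graph C_5 + sK_2 on 5 + 2s vertices). Then G is triangle-free and mis(G) = 5 · 2^s. -/
/-- A finset of vertices is independent: no two of its elements are adjacent. -/
def IsIndepFinset {V : Type*} (G : SimpleGraph V) (s : Finset V) : Prop :=
  ∀ ⦃a⦄, a ∈ s → ∀ ⦃b⦄, b ∈ s → ¬ G.Adj a b

/-- A finset of vertices is a maximal independent set: it is independent and is not
properly contained in any other independent set. -/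
def IsMaxIndepFinset {V : Type*} (G : SimpleGraph V) (s : Finset V) : Prop :=
  IsIndepFinset G s ∧ ∀ t : Finset V, IsIndepFinset G t → s ⊆ t → s = t

/-- `mis G` is the number of maximal independent sets of `G`. -/
noncomputable def mis {V : Type*} (G : SimpleGraph V) : ℕ :=
  Set.ncard {s : Finset V | IsMaxIndepFinset G s}

/-- `G` has an induced triangle matching of size `t`: there are `t` pairwise disjoint
triples of vertices, each triple pairwise adjacent (a triangle), with no edges between
distinct triples (so the induced subgraph on their union is a disjoint union of `t`
triangles). -/
def HasInducedTriangleMatching {V : Type*} (G : SimpleGraph V) (t : ℕ) : Prop :=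
  ∃ f : Fin t → Finset V,
    (∀ i, (f i).card = 3) ∧
    (∀ i j, i ≠ j → Disjoint (f i) (f j)) ∧
    (∀ i, ∀ a ∈ f i, ∀ b ∈ f i, a ≠ b → G.Adj a b) ∧
    (∀ i j, i ≠ j → ∀ a ∈ f i, ∀ b ∈ f j, ¬ G.Adj a b)

/-- `G` has an induced matching of size `t`: there are `t` pairwise disjoint
pairs of vertices, each pair adjacent, with no edges between distinct pairs. -/
def HasInducedMatching {V : Type*} (G : SimpleGraph V) (t : ℕ) : Prop :=
  ∃ f : Fin t → Finset V,
    (∀ i, (f i).card = 2) ∧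
    (∀ i j, i ≠ j → Disjoint (f i) (f j)) ∧
    (∀ i, ∀ a ∈ f i, ∀ b ∈ f i, a ≠ b → G.Adj a b) ∧
    (∀ i j, i ≠ j → ∀ a ∈ f i, ∀ b ∈ f j, ¬ G.Adj a b)

/-- The graph `C₅ + s K₂`: the vertex-disjoint union of a 5-cycle and `s` single edges. -/
def pentagonEdgeUnion (s : ℕ) : SimpleGraph ((Fin 5) ⊕ (Fin s × Fin 2)) :=
  SimpleGraph.fromRel (fun x y =>
    match x, y with
    | .inl a, .inl b => (SimpleGraph.cycleGraph 5).Adj a b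
    | .inr (i, _), .inr (j, _) => i = j
    | _, _ => False)

/-! `C₅ + sK₂` is `C₅ ⊕g (⊥ □ K₂)`. The maximal independent sets of a disjoint union are exactly the
unions of maximal independent sets of the two parts, so `mis` is multiplicative. The maximal
independent sets of `C₅` are the five pairs `{i, i + 2}`, and those of `⊥ □ K_α` are the graphs of
the functions `ι → α`, one vertex from each copy of `K_α`. A triangle of a disjoint union lies in
one part; `C₅` has none, and `⊥ □ K₂` is `2`-colourable by the second coordinate. -/

open SimpleGraph Finset

section
variable {V W : Type*} {G : SimpleGraph V} {H : SimpleGraph W}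

theorem isMaxIndepFinset_iff {s : Finset V} :
    IsMaxIndepFinset G s ↔ IsIndepFinset G s ∧ ∀ v ∉ s, ∃ u ∈ s, G.Adj v u := by
  classical
  refine ⟨fun ⟨hs, hmax⟩ => ⟨hs, fun v hv => ?_⟩, fun ⟨hs, hdom⟩ => ⟨hs, fun t ht hst => ?_⟩⟩
  · by_contra! hfree
    have hins : IsIndepFinset G (insert v s) := by
      intro a ha b hb hab
      rcases mem_insert.1 ha with rfl | ha' <;> rcases mem_insert.1 hb with rfl | hb'
      · exact hab.ne rfl
      · exact hfree b hb' hab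
      · exact hfree a ha' hab.symm
      · exact hs ha' hb' hab
    exact hv ((hmax _ hins (subset_insert v s)).symm ▸ mem_insert_self v s)
  · refine hst.antisymm fun v hvt => ?_
    by_contra hvs
    obtain ⟨u, hus, hvu⟩ := hdom v hvs
    exact ht hvt (hst hus) hvu

theorem mis_eq_card_filter [Fintype V] [DecidableEq V] [DecidableRel G.Adj] :
    mis G = #{s : Finset V | (∀ a ∈ s, ∀ b ∈ s, ¬G.Adj a b) ∧ ∀ v ∉ s, ∃ u ∈ s, G.Adj v u} := by
  rw [mis, ← Set.ncard_coe_finset]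
  congr 1
  ext s
  simp [isMaxIndepFinset_iff, IsIndepFinset]

theorem isMaxIndepFinset_sum_iff {u : Finset (V ⊕ W)} :
    IsMaxIndepFinset (G ⊕g H) u ↔ IsMaxIndepFinset G u.toLeft ∧ IsMaxIndepFinset H u.toRight := by
  simp only [isMaxIndepFinset_iff, IsIndepFinset, sum_adj, Sum.forall, Sum.exists, mem_toLeft,
    mem_toRight, not_false_eq_true, implies_true, and_true, true_and, and_false, exists_false,
    or_false, false_or]
  tauto

theorem mis_sum : mis (G ⊕g H) = mis G * mis H := by
  simp only [mis, ← Nat.card_coe_set_eq, ← Nat.card_prod]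
  exact Nat.card_congr <| (sumEquiv.toEquiv.subtypeEquiv fun _ => isMaxIndepFinset_sum_iff).trans
    Equiv.subtypeProdEquivProd

theorem SimpleGraph.CliqueFree.sum {n : ℕ} (hG : G.CliqueFree n) (hH : H.CliqueFree n) :
    (G ⊕g H).CliqueFree n := by
  intro s hs
  have hcard := card_toLeft_add_card_toRight (u := s)
  rw [hs.card_eq] at hcard
  have hL : G.IsClique (s.toLeft : Set V) := fun a ha b hb hab => by
    simpa using hs.isClique (mem_toLeft.1 ha) (mem_toLeft.1 hb) (by simpa using hab)
  have hR : H.IsClique (s.toRight : Set W) := fun a ha b hb hab => by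
    simpa using hs.isClique (mem_toRight.1 ha) (mem_toRight.1 hb) (by simpa using hab)
  rcases s.toLeft.eq_empty_or_nonempty with hLe | ⟨a, ha⟩
  · exact hH _ ⟨hR, by simpa [hLe] using hcard⟩
  rcases s.toRight.eq_empty_or_nonempty with hRe | ⟨b, hb⟩
  · exact hG _ ⟨hL, by simpa [hRe] using hcard⟩
  exact not_adj_sum_inl_inr a b (hs.isClique (mem_toLeft.1 ha) (mem_toRight.1 hb) Sum.inl_ne_inr)

end

theorem cycleGraph_five_cliqueFree_three : (cycleGraph 5).CliqueFree 3 := by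
  have key : ∀ a b c : Fin 5,
      ¬((cycleGraph 5).Adj a b ∧ (cycleGraph 5).Adj a c ∧ (cycleGraph 5).Adj b c) := by
    decide
  intro s hs
  obtain ⟨a, b, c, hab, hac, hbc, -⟩ := is3Clique_iff.1 hs
  exact key a b c ⟨hab, hac, hbc⟩

theorem mis_cycleGraph_five : mis (cycleGraph 5) = 5 := by
  rw [mis_eq_card_filter]
  decide

section
variable {ι α : Type*}

theorem bot_boxProd_top_adj {x y : ι × α} :
    ((⊥ : SimpleGraph ι) □ (⊤ : SimpleGraph α)).Adj x y ↔ x.1 = y.1 ∧ x.2 ≠ y.2 := by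
  simp [boxProd_adj, and_comm]

theorem cliqueFree_bot_boxProd_top [Fintype α] :
    ((⊥ : SimpleGraph ι) □ (⊤ : SimpleGraph α)).CliqueFree (Fintype.card α + 1) :=
  (Coloring.mk Prod.snd fun h => (bot_boxProd_top_adj.1 h).2).colorable.cliqueFree
    (Nat.lt_succ_self _)

def graphFinset [Fintype ι] (f : ι → α) : Finset (ι × α) :=
  univ.map ⟨fun i => (i, f i), fun _ _ h => (Prod.ext_iff.1 h).1⟩

@[simp]
theorem mem_graphFinset [Fintype ι] {f : ι → α} {x : ι × α} :
    x ∈ graphFinset f ↔ f x.1 = x.2 := by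
  constructor
  · simp only [graphFinset, mem_map, mem_univ, true_and]
    rintro ⟨i, rfl⟩
    rfl
  · intro h
    exact mem_map.2 ⟨x.1, mem_univ _, Prod.ext rfl h⟩

theorem graphFinset_injective [Fintype ι] : Function.Injective (graphFinset : (ι → α) → _) := by
  intro f g h
  funext i
  have : (i, f i) ∈ graphFinset g := h ▸ mem_graphFinset.2 rfl
  exact (mem_graphFinset.1 this).symm

theorem isMaxIndepFinset_bot_boxProd_top_iff [Fintype ι] [Nonempty α] {u : Finset (ι × α)} :
    IsMaxIndepFinset ((⊥ : SimpleGraph ι) □ (⊤ : SimpleGraph α)) u ↔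
      ∃ f : ι → α, graphFinset f = u := by
  simp only [isMaxIndepFinset_iff, IsIndepFinset, bot_boxProd_top_adj]
  constructor
  · rintro ⟨hind, hdom⟩
    have hrow : ∀ i, ∃ x, (i, x) ∈ u := by
      intro i
      by_contra! hempty
      obtain ⟨⟨j, y⟩, hw, rfl : i = j, -⟩ := hdom (i, Classical.arbitrary α) (hempty _)
      exact hempty y hw
    choose f hf using hrow
    refine ⟨f, ext fun x => ⟨fun hx => ?_, fun hx => ?_⟩⟩
    · rw [mem_graphFinset] at hx
      simpa [hx] using hf x.1
    · rw [mem_graphFinset]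
      by_contra hne
      exact hind (hf x.1) hx ⟨rfl, hne⟩
  · rintro ⟨f, rfl⟩
    refine ⟨fun a ha b hb hab => ?_, fun v hv => ⟨(v.1, f v.1), by simp, rfl, ?_⟩⟩
    · rw [mem_graphFinset] at ha hb
      exact hab.2 (by rw [← ha, ← hb, hab.1])
    · simpa [eq_comm] using hv

theorem mis_bot_boxProd_top [Fintype ι] [Nonempty α] :
    mis ((⊥ : SimpleGraph ι) □ (⊤ : SimpleGraph α)) = Nat.card α ^ Nat.card ι := by
  have hset : {u | IsMaxIndepFinset ((⊥ : SimpleGraph ι) □ (⊤ : SimpleGraph α)) u} =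
      Set.range graphFinset :=
    Set.ext fun _ => isMaxIndepFinset_bot_boxProd_top_iff
  rw [mis, hset, Set.ncard_range_of_injective graphFinset_injective, Nat.card_fun]

end

theorem pentagonEdgeUnion_eq (s : ℕ) :
    pentagonEdgeUnion s =
      cycleGraph 5 ⊕g ((⊥ : SimpleGraph (Fin s)) □ (⊤ : SimpleGraph (Fin 2))) := by
  ext (a | ⟨i, x⟩) (b | ⟨j, y⟩) <;> simp [pentagonEdgeUnion] <;> grind [Adj.ne, Adj.symm]

theorem mis_pentagonEdgeUnion (s : ℕ) :
    (pentagonEdgeUnion s).CliqueFree 3 ∧ mis (pentagonEdgeUnion s) = 5 * 2 ^ s := by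
  rw [pentagonEdgeUnion_eq]
  refine ⟨cycleGraph_five_cliqueFree_three.sum cliqueFree_bot_boxProd_top, ?_⟩
  rw [mis_sum, mis_cycleGraph_five, mis_bot_boxProd_top]
  simp
end

section
/- Let n ≥ 3 be an integer divisible by 3. Then the maximum of mis(G) over all simple graphs G on n vertices equals 3^{n/3}; that is, every graph G on n vertices satisfies mis(G) ≤ 3^{n/3}, and some graph on n vertices attains this value. -/
/-!
Every maximal independent set `S` of the graph induced on `W` meets the closed neighbourhood
`N[v]` of any `v ∈ W`, and for `u ∈ S ∩ N[v]` the set `S \ {u}` is a maximal independent set of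
`W \ N[u]`. Taking `v` of minimum degree, `|N[u]| ≥ |N[v]| = D` for every `u ∈ N[v]`, so the
number `f W` of maximal independent sets satisfies `f W ≤ D · max_u f (W \ N[u])`, and induction
together with `D³ ≤ 3^D` gives `(f W)³ ≤ 3^|W|`. Equality holds for `n / 3` disjoint triangles,
whose maximal independent sets pick one vertex from each triangle.
-/

open Finset

lemma Finset.sum_pow_le_card_pow_mul {ι : Type*} {s : Finset ι} (hs : s.Nonempty) {a : ι → ℕ}
    {k M : ℕ} (h : ∀ i ∈ s, a i ^ k ≤ M) : (∑ i ∈ s, a i) ^ k ≤ s.card ^ k * M := by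
  obtain ⟨i, hi, hmax⟩ := s.exists_mem_eq_sup hs a
  calc (∑ i ∈ s, a i) ^ k ≤ (s.card * s.sup a) ^ k :=
        Nat.pow_le_pow_left (sum_le_card_nsmul s a _ fun j hj => le_sup hj) k
    _ = s.card ^ k * a i ^ k := by rw [mul_pow, hmax]
    _ ≤ s.card ^ k * M := Nat.mul_le_mul_left _ (h i hi)

lemma cube_le_three_pow (k : ℕ) : k ^ 3 ≤ 3 ^ k := by
  induction k with
  | zero => decide
  | succ m ih =>
    rcases Nat.lt_or_ge m 3 with h | h
    · interval_cases m <;> decide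
    · calc (m + 1) ^ 3 ≤ 3 * m ^ 3 := by nlinarith [Nat.mul_le_mul_right (m * m) h]
        _ ≤ 3 * 3 ^ m := Nat.mul_le_mul_left 3 ih
        _ = 3 ^ (m + 1) := (pow_succ' 3 m).symm

section IndepDominating

variable {V : Type*} (G : SimpleGraph V)

/-- `s` is a maximal independent set of the graph induced on `W`, in the form: independent and
dominating `W`. -/
def IsIndepDominating (W s : Finset V) : Prop :=
  s ⊆ W ∧ IsIndepFinset G s ∧ ∀ w ∈ W, w ∉ s → ∃ x ∈ s, G.Adj w x

variable {G}

lemma isIndepFinset_insert [DecidableEq V] {s : Finset V} {v : V} :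
    IsIndepFinset G (insert v s) ↔ IsIndepFinset G s ∧ ∀ b ∈ s, ¬ G.Adj v b := by
  refine ⟨fun h => ⟨fun a ha b hb => h (mem_insert_of_mem ha) (mem_insert_of_mem hb),
    fun b hb => h (mem_insert_self v s) (mem_insert_of_mem hb)⟩, ?_⟩
  rintro ⟨hs, hv⟩ a ha b hb
  rcases mem_insert.mp ha with rfl | ha' <;> rcases mem_insert.mp hb with rfl | hb'
  · exact G.loopless.irrefl _
  · exact hv b hb'
  · exact fun hab => hv a ha' hab.symm
  · exact hs ha' hb'

variable (G) in
noncomputable def misIn (W : Finset V) : Finset (Finset V) := by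
  classical exact W.powerset.filter (IsIndepDominating G W)

lemma mem_misIn {W s : Finset V} : s ∈ misIn G W ↔ IsIndepDominating G W s := by
  classical
  simp only [misIn, mem_filter, mem_powerset, and_iff_right_iff_imp]
  exact fun hs => hs.1

lemma isMaxIndepFinset_iff_isIndepDominating_univ [Fintype V] [DecidableEq V] {s : Finset V} :
    IsMaxIndepFinset G s ↔ IsIndepDominating G univ s := by
  constructor
  · rintro ⟨hs, hmax⟩
    refine ⟨subset_univ s, hs, fun w _ hw => ?_⟩
    by_contra! hfree
    have := hmax (insert w s) (isIndepFinset_insert.mpr ⟨hs, hfree⟩) (subset_insert w s)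
    exact hw (this ▸ mem_insert_self w s)
  · rintro ⟨-, hs, hdom⟩
    refine ⟨hs, fun t ht hst => (hst.antisymm fun x hx => ?_)⟩
    by_contra hxs
    obtain ⟨y, hy, hxy⟩ := hdom x (mem_univ x) hxs
    exact ht hx (hst hy) hxy

end IndepDominating

section UpperBound

variable {V : Type*} [DecidableEq V] {G : SimpleGraph V} [DecidableRel G.Adj]

variable (G) in
def closedNbhdIn (W : Finset V) (u : V) : Finset V := insert u (W.filter (G.Adj u))

lemma closedNbhdIn_subset {W : Finset V} {u : V} (hu : u ∈ W) : closedNbhdIn G W u ⊆ W :=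
  insert_subset hu (filter_subset _ _)

lemma sdiff_closedNbhdIn_ssubset {W : Finset V} {u : V} (hu : u ∈ W) :
    W \ closedNbhdIn G W u ⊂ W :=
  sdiff_ssubset (closedNbhdIn_subset hu) ⟨u, mem_insert_self _ _⟩

lemma IsIndepDominating.exists_mem_closedNbhdIn {W s : Finset V} (hs : IsIndepDominating G W s)
    {v : V} (hv : v ∈ W) : ∃ u ∈ closedNbhdIn G W v, u ∈ s := by
  by_cases hvs : v ∈ s
  · exact ⟨v, mem_insert_self v _, hvs⟩
  · obtain ⟨x, hx, hvx⟩ := hs.2.2 v hv hvs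
    exact ⟨x, mem_insert_of_mem (mem_filter.mpr ⟨hs.1 hx, hvx⟩), hx⟩

lemma IsIndepDominating.erase {W s : Finset V} (hs : IsIndepDominating G W s) {u : V}
    (hu : u ∈ s) : IsIndepDominating G (W \ closedNbhdIn G W u) (s.erase u) := by
  obtain ⟨hsW, hind, hdom⟩ := hs
  refine ⟨fun x hx => ?_, fun a ha b hb => hind (mem_of_mem_erase ha) (mem_of_mem_erase hb),
    fun w hw hws => ?_⟩
  · obtain ⟨hxu, hxs⟩ := mem_erase.mp hx
    simp only [closedNbhdIn, mem_sdiff, mem_insert, mem_filter, not_or, not_and]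
    exact ⟨hsW hxs, hxu, fun _ => hind hu hxs⟩
  · simp only [closedNbhdIn, mem_sdiff, mem_insert, mem_filter, not_or, not_and] at hw
    obtain ⟨hwW, hwu, hwnu⟩ := hw
    obtain ⟨x, hxs, hwx⟩ := hdom w hwW fun h => hws (mem_erase.mpr ⟨hwu, h⟩)
    have hxu : x ≠ u := by rintro rfl; exact hwnu hwW hwx.symm
    exact ⟨x, mem_erase.mpr ⟨hxu, hxs⟩, hwx⟩

lemma card_misIn_le_sum {W : Finset V} {v : V} (hv : v ∈ W) :
    (misIn G W).card ≤ ∑ u ∈ closedNbhdIn G W v, (misIn G (W \ closedNbhdIn G W u)).card := by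
  have hcover : misIn G W ⊆ (closedNbhdIn G W v).biUnion
      fun u => (misIn G (W \ closedNbhdIn G W u)).image (insert u) := by
    intro s hs
    obtain ⟨u, hu, hus⟩ := (mem_misIn.mp hs).exists_mem_closedNbhdIn hv
    exact mem_biUnion.mpr ⟨u, hu, mem_image.mpr
      ⟨s.erase u, mem_misIn.mpr ((mem_misIn.mp hs).erase hus), insert_erase hus⟩⟩
  calc (misIn G W).card
      ≤ ∑ u ∈ closedNbhdIn G W v, ((misIn G (W \ closedNbhdIn G W u)).image (insert u)).card :=
        (card_le_card hcover).trans card_biUnion_le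
    _ ≤ _ := sum_le_sum fun _ _ => card_image_le

end UpperBound

/-- Cubed, to avoid the real exponent `|W| / 3`. -/
theorem card_misIn_pow_three_le {V : Type*} [DecidableEq V] (G : SimpleGraph V)
    [DecidableRel G.Adj] (W : Finset V) : (misIn G W).card ^ 3 ≤ 3 ^ W.card := by
  induction W using Finset.strongInduction with
  | _ W ih =>
  rcases W.eq_empty_or_nonempty with rfl | hW
  · have : (misIn G ∅).card ≤ 1 := card_le_one.mpr fun s hs t ht =>
      (subset_empty.mp (mem_misIn.mp hs).1).trans (subset_empty.mp (mem_misIn.mp ht).1).symm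
    simpa using Nat.pow_le_pow_left this 3
  obtain ⟨v, hv, hmin⟩ := W.exists_min_image (fun u => (closedNbhdIn G W u).card) hW
  set D := (closedNbhdIn G W v).card
  have hDW : D ≤ W.card := card_le_card (closedNbhdIn_subset hv)
  have hbranch : ∀ u ∈ closedNbhdIn G W v,
      (misIn G (W \ closedNbhdIn G W u)).card ^ 3 ≤ 3 ^ (W.card - D) := by
    intro u hu
    have huW := closedNbhdIn_subset hv hu
    refine (ih _ (sdiff_closedNbhdIn_ssubset huW)).trans (Nat.pow_le_pow_right (by norm_num) ?_)
    rw [card_sdiff_of_subset (closedNbhdIn_subset huW)]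
    exact Nat.sub_le_sub_left (hmin u huW) _
  calc (misIn G W).card ^ 3
      ≤ (∑ u ∈ closedNbhdIn G W v, (misIn G (W \ closedNbhdIn G W u)).card) ^ 3 :=
        Nat.pow_le_pow_left (card_misIn_le_sum hv) 3
    _ ≤ D ^ 3 * 3 ^ (W.card - D) := sum_pow_le_card_pow_mul ⟨v, mem_insert_self _ _⟩ hbranch
    _ ≤ 3 ^ D * 3 ^ (W.card - D) := Nat.mul_le_mul_right _ (cube_le_three_pow D)
    _ = 3 ^ W.card := by rw [← pow_add, Nat.add_sub_cancel' hDW]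

lemma mis_eq_card_misIn_univ {V : Type*} [Fintype V] [DecidableEq V] (G : SimpleGraph V)
    [DecidableRel G.Adj] : mis G = (misIn G univ).card := by
  rw [mis, ← Set.ncard_coe_finset]
  congr 1
  ext s
  simp [mem_misIn, isMaxIndepFinset_iff_isIndepDominating_univ]

lemma IsIndepDominating.map_iso {V W : Type*} [Fintype V] [Fintype W] [DecidableEq W]
    {G : SimpleGraph V} {G' : SimpleGraph W} (e : G ≃g G') {s : Finset V}
    (hs : IsIndepDominating G univ s) : IsIndepDominating G' univ (s.map e.toEquiv.toEmbedding) := by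
  obtain ⟨-, hind, hdom⟩ := hs
  refine ⟨subset_univ _, ?_, fun w _ hw => ?_⟩
  · simp only [IsIndepFinset, mem_map, forall_exists_index, and_imp]
    rintro _ a ha rfl _ b hb rfl
    exact fun h => hind ha hb (e.map_adj_iff.mp h)
  · obtain ⟨v, rfl⟩ := e.surjective w
    obtain ⟨x, hx, hvx⟩ := hdom v (mem_univ v) fun hv => hw (mem_map_of_mem _ hv)
    exact ⟨e x, mem_map_of_mem _ hx, e.map_adj_iff.mpr hvx⟩

lemma mis_le_of_iso {V W : Type*} [Fintype V] [DecidableEq V] [Fintype W] [DecidableEq W]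
    {G : SimpleGraph V} {G' : SimpleGraph W} (e : G ≃g G') : mis G ≤ mis G' := by
  refine Set.ncard_le_ncard_of_injOn (fun s => s.map e.toEquiv.toEmbedding) (fun s hs => ?_)
    (map_injective _).injOn (Set.toFinite _)
  simp only [Set.mem_ofPred_eq, isMaxIndepFinset_iff_isIndepDominating_univ] at hs ⊢
  exact hs.map_iso e

lemma mis_congr {V W : Type*} [Fintype V] [DecidableEq V] [Fintype W] [DecidableEq W]
    {G : SimpleGraph V} {G' : SimpleGraph W} (e : G ≃g G') : mis G = mis G' :=
  (mis_le_of_iso e).antisymm (mis_le_of_iso e.symm)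

section DisjointCliques

variable {ι α : Type*} [Fintype ι] [DecidableEq ι] [DecidableEq α]

def finsetGraph (f : ι → α) : Finset (ι × α) := univ.image fun i => (i, f i)

lemma mem_finsetGraph {f : ι → α} {x : ι × α} : x ∈ finsetGraph f ↔ f x.1 = x.2 := by
  obtain ⟨i, a⟩ := x
  simp [finsetGraph]

lemma finsetGraph_injective : Function.Injective (finsetGraph : (ι → α) → Finset (ι × α)) := by
  intro f g h
  funext i
  have : (i, f i) ∈ finsetGraph g := h ▸ mem_finsetGraph.mpr rfl
  exact (mem_finsetGraph.mp this).symm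

variable [Fintype α]

/-- `⊥ □ ⊤` is the disjoint union of `card ι` cliques on `α`. -/
lemma isIndepDominating_finsetGraph (f : ι → α) :
    IsIndepDominating ((⊥ : SimpleGraph ι) □ (⊤ : SimpleGraph α)) univ (finsetGraph f) := by
  refine ⟨subset_univ _, fun x hx y hy hxy => ?_, fun x _ hx => ?_⟩
  · rw [mem_finsetGraph] at hx hy
    simp only [SimpleGraph.boxProd_adj, SimpleGraph.bot_adj, false_and, SimpleGraph.top_adj,
      false_or] at hxy
    exact hxy.1 (hx.symm.trans (hxy.2 ▸ hy))
  · refine ⟨(x.1, f x.1), mem_finsetGraph.mpr rfl, ?_⟩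
    simp only [SimpleGraph.boxProd_adj, SimpleGraph.bot_adj, false_and, SimpleGraph.top_adj,
      false_or, and_true]
    exact fun h => hx (mem_finsetGraph.mpr h.symm)

lemma IsIndepDominating.exists_finsetGraph_eq [Nonempty α] {s : Finset (ι × α)}
    (hs : IsIndepDominating ((⊥ : SimpleGraph ι) □ (⊤ : SimpleGraph α)) univ s) :
    ∃ f : ι → α, finsetGraph f = s := by
  obtain ⟨-, hind, hdom⟩ := hs
  have hmeet : ∀ i, ∃ a, (i, a) ∈ s := by
    intro i
    obtain ⟨a⟩ := ‹Nonempty α›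
    by_cases ha : (i, a) ∈ s
    · exact ⟨a, ha⟩
    · obtain ⟨x, hx, hax⟩ := hdom (i, a) (mem_univ _) ha
      simp only [SimpleGraph.boxProd_adj, SimpleGraph.bot_adj, false_and, false_or] at hax
      exact ⟨x.2, hax.2 ▸ hx⟩
  choose f hf using hmeet
  refine ⟨f, Finset.ext fun ⟨i, a⟩ => ⟨fun hx => ?_, fun hx => ?_⟩⟩
  · have hfi : f i = a := mem_finsetGraph.mp hx
    exact hfi ▸ hf i
  · rw [mem_finsetGraph]
    by_contra hne
    refine hind (hf i) hx ?_
    simp [hne]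

lemma mis_boxProd_bot_top [Nonempty α] :
    mis ((⊥ : SimpleGraph ι) □ (⊤ : SimpleGraph α)) = Fintype.card α ^ Fintype.card ι := by
  have : {s | IsMaxIndepFinset ((⊥ : SimpleGraph ι) □ (⊤ : SimpleGraph α)) s} =
      Set.range finsetGraph := by
    ext s
    simp only [Set.mem_ofPred_eq, isMaxIndepFinset_iff_isIndepDominating_univ, Set.mem_range]
    exact ⟨IsIndepDominating.exists_finsetGraph_eq,
      by rintro ⟨f, rfl⟩; exact isIndepDominating_finsetGraph f⟩
  rw [mis, this, Set.ncard_range_of_injective finsetGraph_injective, Nat.card_fun,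
    Nat.card_eq_fintype_card, Nat.card_eq_fintype_card]

end DisjointCliques

theorem moon_moser_zero_mod_three_general (n : ℕ) (hdvd : 3 ∣ n) :
    (∀ G : SimpleGraph (Fin n), mis G ≤ 3 ^ (n / 3)) ∧
    (∃ G : SimpleGraph (Fin n), mis G = 3 ^ (n / 3)) := by
  classical
  refine ⟨fun G => ?_, ?_⟩
  · have h := card_misIn_pow_three_le G univ
    have hpow : (3 : ℕ) ^ n = (3 ^ (n / 3)) ^ 3 := by rw [← pow_mul, Nat.div_mul_cancel hdvd]
    rw [← mis_eq_card_misIn_univ, card_univ, Fintype.card_fin, hpow] at h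
    exact (Nat.pow_le_pow_iff_left (by norm_num)).mp h
  · let e : Fin (n / 3) × Fin 3 ≃ Fin n :=
      finProdFinEquiv.trans (finCongr (Nat.div_mul_cancel hdvd))
    refine ⟨((⊥ : SimpleGraph (Fin (n / 3))) □ (⊤ : SimpleGraph (Fin 3))).map e, ?_⟩
    rw [← mis_congr (SimpleGraph.Iso.map e _), mis_boxProd_bot_top, Fintype.card_fin,
      Fintype.card_fin]

theorem moon_moser_zero_mod_three (n : ℕ) (hn : 3 ≤ n) (hdvd : 3 ∣ n) :
    (∀ G : SimpleGraph (Fin n), mis G ≤ 3 ^ (n / 3)) ∧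
    (∃ G : SimpleGraph (Fin n), mis G = 3 ^ (n / 3)) :=
  moon_moser_zero_mod_three_general n hdvd
end
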